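/- arXiv:2012.05307 — 2 statements merged into one kernel-verified Lean document; each statement's English description precedes it below -/
import Mathlib

section
/- Let F be a field and let M be an n×m matrix over F. If A, A' ∈ T_n(F) and B, B' ∈ T_m(F) are unitriangular matrices such that both A·M·B and A'·M·B' are rook matrices, then A·M·B = A'·M·B'. (Uniqueness part of the enhanced Bruhat decomposition: every orbit of the action of T_n(F) × T_m(F) on n×m matrices contains at most one rook matrix.) -/
/-- A square matrix is unitriangular if it is upper triangular with 1's on the diagonal. -/
def Matrix.IsUnitriangular {n : ℕ} {R : Type*} [Zero R] [One R]
    (A : Matrix (Fin n) (Fin n) R) : Prop :=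
  (∀ i, A i i = 1) ∧ ∀ i j : Fin n, j < i → A i j = 0

/-- A matrix is a rook matrix if every row and every column contains
at most one nonzero entry. -/
def Matrix.IsRook {n m : ℕ} {F : Type*} [Zero F]
    (R : Matrix (Fin n) (Fin m) F) : Prop :=
  (∀ i j j', R i j ≠ 0 → R i j' ≠ 0 → j = j') ∧
  (∀ i i' j, R i j ≠ 0 → R i' j ≠ 0 → i = i')

/-!
Write `R = A M B` and `R' = A' M B'`. Eliminating `M` gives `W R' = R V` with
`W = A A'⁻¹` and `V = B⁻¹ B'` unitriangular. Entry `(i, j)` of this identity reads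
`R' i j + ∑_{k > i} W i k R' k j = R i j + ∑_{l < j} R i l V l j`. Induct on `j` upwards
and, for fixed `j`, on `i` downwards: if `R' i j ≠ 0`, the rook property of `R'` kills
the left sum and, through the induction hypothesis, the right one; if `R i j ≠ 0` the
same holds with the roles exchanged. Either way `R' i j = R i j`.
-/

namespace Matrix

theorem IsUpperTriangular.diag_mul {m α : Type*} [Fintype m] [LinearOrder m]
    [NonUnitalNonAssocSemiring α] {M N : Matrix m m α}
    (hM : M.IsUpperTriangular) (hN : N.IsUpperTriangular) :
    (M * N).diag = M.diag * N.diag := by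
  ext i
  rw [Pi.mul_apply, diag_apply, diag_apply, diag_apply, mul_apply]
  refine Fintype.sum_eq_single i fun k hk => ?_
  rcases hk.lt_or_gt with hki | hik
  · rw [hM hki, zero_mul]
  · rw [hN hik, mul_zero]

section Unitriangular

variable {n m : ℕ} {α : Type*}

theorem isUnitriangular_iff [Zero α] [One α] {A : Matrix (Fin n) (Fin n) α} :
    A.IsUnitriangular ↔ A.IsUpperTriangular ∧ A.diag = 1 :=
  ⟨fun hA => ⟨fun _ _ h => hA.2 _ _ h, funext hA.1⟩,
    fun hA => ⟨congrFun hA.2, fun _ _ h => hA.1 h⟩⟩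

theorem IsUnitriangular.mul [NonAssocSemiring α] {A B : Matrix (Fin n) (Fin n) α}
    (hA : A.IsUnitriangular) (hB : B.IsUnitriangular) : (A * B).IsUnitriangular := by
  rw [isUnitriangular_iff] at *
  refine ⟨hA.1.mul hB.1, ?_⟩
  rw [hA.1.diag_mul hB.1, hA.2, hB.2, one_mul]

theorem IsUnitriangular.det_eq_one [CommRing α] {A : Matrix (Fin n) (Fin n) α}
    (hA : A.IsUnitriangular) : A.det = 1 := by
  simp [det_of_isUpperTriangular (isUnitriangular_iff.1 hA).1, hA.1]

theorem IsUnitriangular.isUnit_det [CommRing α] {A : Matrix (Fin n) (Fin n) α}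
    (hA : A.IsUnitriangular) : IsUnit A.det :=
  hA.det_eq_one ▸ isUnit_one

theorem IsUnitriangular.inv [CommRing α] {A : Matrix (Fin n) (Fin n) α}
    (hA : A.IsUnitriangular) : A⁻¹.IsUnitriangular := by
  have := A.invertibleOfIsUnitDet hA.isUnit_det
  obtain ⟨hU, hD⟩ := isUnitriangular_iff.1 hA
  have hU' : A⁻¹.IsUpperTriangular := blockTriangular_inv_of_blockTriangular hU
  refine isUnitriangular_iff.2 ⟨hU', ?_⟩
  calc A⁻¹.diag = A.diag * A⁻¹.diag := by rw [hD, one_mul]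
    _ = 1 := by rw [← hU.diag_mul hU', mul_inv_of_invertible, diag_one]

theorem IsUnitriangular.mul_apply_eq_of_below_eq_zero [NonAssocSemiring α]
    {W : Matrix (Fin n) (Fin n) α} (hW : W.IsUnitriangular) {X : Matrix (Fin n) (Fin m) α}
    {i : Fin n} {j : Fin m} (hX : ∀ k, i < k → X k j = 0) : (W * X) i j = X i j := by
  rw [mul_apply, Fintype.sum_eq_single i fun k hk => ?_, hW.1, one_mul]
  rcases hk.lt_or_gt with hki | hik
  · rw [hW.2 i k hki, zero_mul]
  · rw [hX k hik, mul_zero]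

theorem IsUnitriangular.mul_apply_eq_of_left_eq_zero [NonAssocSemiring α]
    {V : Matrix (Fin m) (Fin m) α} (hV : V.IsUnitriangular) {X : Matrix (Fin n) (Fin m) α}
    {i : Fin n} {j : Fin m} (hX : ∀ l, l < j → X i l = 0) : (X * V) i j = X i j := by
  rw [mul_apply, Fintype.sum_eq_single j fun l hl => ?_, hV.1, mul_one]
  rcases hl.lt_or_gt with hlj | hjl
  · rw [hX l hlj, zero_mul]
  · rw [hV.2 l j hjl, mul_zero]

end Unitriangular

namespace IsRook

variable {n m : ℕ} {α : Type*}

theorem eq_zero_of_same_row [Zero α] {R : Matrix (Fin n) (Fin m) α} (hR : R.IsRook)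
    {i : Fin n} {j l : Fin m} (hij : R i j ≠ 0) (hl : l ≠ j) : R i l = 0 :=
  by_contra fun h => hl (hR.1 i l j h hij)

theorem eq_zero_of_same_col [Zero α] {R : Matrix (Fin n) (Fin m) α} (hR : R.IsRook)
    {i k : Fin n} {j : Fin m} (hij : R i j ≠ 0) (hk : k ≠ i) : R k j = 0 :=
  by_contra fun h => hk (hR.2 k i j h hij)

theorem eq_of_mul_eq_mul [NonAssocSemiring α] {R R' : Matrix (Fin n) (Fin m) α}
    {W : Matrix (Fin n) (Fin n) α} {V : Matrix (Fin m) (Fin m) α}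
    (hR : R.IsRook) (hR' : R'.IsRook) (hW : W.IsUnitriangular) (hV : V.IsUnitriangular)
    (h : W * R' = R * V) : R' = R := by
  ext i j
  induction j using WellFoundedLT.induction generalizing i with | _ j ihj
  induction i using WellFoundedGT.induction with | _ i ihi
  by_cases hzero : R' i j = 0 ∧ R i j = 0
  · rw [hzero.1, hzero.2]
  obtain ⟨hbelow, hleft⟩ : (∀ k, i < k → R' k j = 0) ∧ ∀ l, l < j → R i l = 0 := by
    rcases not_and_or.1 hzero with hR'ij | hRij
    · exact ⟨fun k hk => hR'.eq_zero_of_same_col hR'ij hk.ne',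
        fun l hl => ihj l hl i ▸ hR'.eq_zero_of_same_row hR'ij hl.ne⟩
    · exact ⟨fun k hk => (ihi k hk).symm ▸ hR.eq_zero_of_same_col hRij hk.ne',
        fun l hl => hR.eq_zero_of_same_row hRij hl.ne⟩
  have hij := congrFun (congrFun h i) j
  rwa [hW.mul_apply_eq_of_below_eq_zero hbelow, hV.mul_apply_eq_of_left_eq_zero hleft] at hij

end IsRook

end Matrix

/-- Uniqueness part of the enhanced Bruhat decomposition: an orbit of the action of
`T_n(F) × T_m(F)` on `n × m` matrices contains at most one rook matrix. -/
theorem enhanced_bruhat_uniqueness {F : Type*} [Field F] {n m : ℕ}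
    (M : Matrix (Fin n) (Fin m) F)
    (A A' : Matrix (Fin n) (Fin n) F) (B B' : Matrix (Fin m) (Fin m) F)
    (hA : A.IsUnitriangular) (hA' : A'.IsUnitriangular)
    (hB : B.IsUnitriangular) (hB' : B'.IsUnitriangular)
    (hR : (A * M * B).IsRook) (hR' : (A' * M * B').IsRook) :
    A * M * B = A' * M * B' := by
  refine (hR.eq_of_mul_eq_mul hR' (hA.mul hA'.inv) (hB.inv.mul hB') ?_).symm
  calc A * A'⁻¹ * (A' * M * B') = A * (A'⁻¹ * A') * M * B' := by
        simp only [Matrix.mul_assoc]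
    _ = A * M * (B * B⁻¹) * B' := by
        rw [Matrix.nonsing_inv_mul A' hA'.isUnit_det, Matrix.mul_nonsing_inv B hB.isUnit_det,
          Matrix.mul_one, Matrix.mul_one]
    _ = A * M * B * (B⁻¹ * B') := by
        simp only [Matrix.mul_assoc]
end

section
/- Let F be a field, let n ≥ 2 and let m_0, m_1, …, m_n be nonnegative integers. For each k ∈ {1, …, n} let D_k be an m_{k−1} × m_k matrix over F, and suppose that D_k · D_{k+1} = 0 for all k ∈ {1, …, n−1}. Let R_k denote the rook matrix of D_k. Then R_k · R_{k+1} = 0 for all k ∈ {1, …, n−1}; that is, the rook matrices of the differentials of a chain complex again form the differentials of a chain complex. -/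
open Matrix

theorem Matrix.IsUpperTriangular.mulVec_apply_of_forall_lt_eq_zero {ι R : Type*} [LinearOrder ι]
    [Fintype ι] [NonUnitalNonAssocSemiring R] {M : Matrix ι ι R} (hM : M.IsUpperTriangular)
    {v : ι → R} {l : ι} (hv : ∀ p, l < p → v p = 0) : (M *ᵥ v) l = M l l * v l := by
  rw [mulVec, dotProduct, Finset.sum_eq_single l]
  · intro q _ hq
    rcases lt_or_gt_of_ne hq with hlt | hgt
    · rw [hM hlt, zero_mul]
    · rw [hv q hgt, mul_zero]
  · simp

namespace Matrix.IsUnitriangular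

variable {R : Type*} [CommRing R] {n : ℕ} {A : Matrix (Fin n) (Fin n) R}

theorem isUpperTriangular (hA : A.IsUnitriangular) : A.IsUpperTriangular :=
  fun i j h => hA.2 i j h

theorem det_eq_one_s12 (hA : A.IsUnitriangular) : A.det = 1 := by
  simp [det_of_isUpperTriangular hA.isUpperTriangular, hA.1]

theorem isUnit_det_s12 (hA : A.IsUnitriangular) : IsUnit A.det := by
  simp [hA.det_eq_one_s12]

theorem mulVec_apply_of_forall_lt_eq_zero (hA : A.IsUnitriangular) {v : Fin n → R} {l : Fin n}
    (hv : ∀ p, l < p → v p = 0) : (A *ᵥ v) l = v l := by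
  rw [hA.isUpperTriangular.mulVec_apply_of_forall_lt_eq_zero hv, hA.1, one_mul]

theorem inv_s12 (hA : A.IsUnitriangular) : A⁻¹.IsUnitriangular := by
  have := A.invertibleOfIsUnitDet hA.isUnit_det_s12
  have htri : A⁻¹.IsUpperTriangular :=
    blockTriangular_inv_of_blockTriangular hA.isUpperTriangular
  refine ⟨fun l => ?_, fun i j h => htri h⟩
  have hcol : ∀ p, l < p → A p l = 0 := fun p hp => hA.2 p l hp
  calc A⁻¹ l l = A⁻¹ l l * A l l := by rw [hA.1, mul_one]
    _ = (A⁻¹ * A) l l := (htri.mulVec_apply_of_forall_lt_eq_zero hcol).symm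
    _ = 1 := by rw [nonsing_inv_mul A hA.isUnit_det_s12, one_apply_eq]

end Matrix.IsUnitriangular

namespace Matrix.IsRook

variable {R : Type*} {a b c : ℕ}

theorem mulVec_apply_of_ne_zero [NonUnitalNonAssocSemiring R] {M : Matrix (Fin a) (Fin b) R}
    (hM : M.IsRook) {i : Fin a} {l : Fin b} (h : M i l ≠ 0) (v : Fin b → R) :
    (M *ᵥ v) i = M i l * v l := by
  rw [mulVec, dotProduct, Finset.sum_eq_single l]
  · intro q _ hq
    rw [not_imp_comm.mp (hM.1 i q l · h) hq, zero_mul]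
  · simp

theorem col_eq_single [Zero R] {M : Matrix (Fin a) (Fin b) R} (hM : M.IsRook) {l : Fin a}
    {j : Fin b} (h : M l j ≠ 0) : M.col j = Pi.single l (M l j) := by
  ext p
  rcases eq_or_ne p l with rfl | hp
  · simp
  · rw [Pi.single_eq_of_ne hp, col_apply, not_imp_comm.mp (hM.2 p l j · h) hp]

theorem exists_mulVec_pivot [CommRing R] {M D : Matrix (Fin a) (Fin b) R}
    {A : Matrix (Fin a) (Fin a) R} {B : Matrix (Fin b) (Fin b) R} (hM : M.IsRook)
    (hA : A.IsUnitriangular) (hADB : A * D * B = M) {l : Fin a} {j : Fin b} (h : M l j ≠ 0) :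
    ∃ v, (D *ᵥ v) l = M l j ∧ ∀ p, l < p → (D *ᵥ v) p = 0 := by
  have hDB : D * B = A⁻¹ * M := by
    rw [← hADB, Matrix.mul_assoc, ← Matrix.mul_assoc A⁻¹,
      nonsing_inv_mul A hA.isUnit_det_s12, Matrix.one_mul]
  have hDv : ∀ p, (D *ᵥ (B *ᵥ Pi.single j 1)) p = A⁻¹ p l * M l j := by
    intro p
    rw [mulVec_mulVec, hDB, ← mulVec_mulVec, mulVec_single_one, hM.col_eq_single h,
      mulVec_single]
    simp
  refine ⟨B *ᵥ Pi.single j 1, ?_, fun p hp => ?_⟩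
  · rw [hDv, hA.inv_s12.1 l, one_mul]
  · rw [hDv, hA.inv_s12.2 p l hp, zero_mul]

theorem mul_apply_eq_zero_of_mulVec_eq_zero [CommRing R] {M D : Matrix (Fin a) (Fin b) R}
    {A : Matrix (Fin a) (Fin a) R} {B : Matrix (Fin b) (Fin b) R}
    (hM : M.IsRook) (hB : B.IsUnitriangular) (hADB : A * D * B = M) {i : Fin a} {l : Fin b}
    (h : M i l ≠ 0) {v : Fin b → R} (hv : ∀ p, l < p → v p = 0) (hDv : D *ᵥ v = 0) :
    M i l * v l = 0 := by
  have hMB : M * B⁻¹ = A * D := by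
    rw [← hADB, Matrix.mul_assoc, mul_nonsing_inv B hB.isUnit_det_s12, Matrix.mul_one]
  have hkill : M *ᵥ (B⁻¹ *ᵥ v) = 0 := by
    rw [mulVec_mulVec, hMB, ← mulVec_mulVec, hDv, mulVec_zero]
  rw [← hB.inv_s12.mulVec_apply_of_forall_lt_eq_zero hv, ← hM.mulVec_apply_of_ne_zero h, hkill,
    Pi.zero_apply]

theorem mul_eq_zero_of_mul_eq_zero [CommRing R] {R₁ D₁ : Matrix (Fin a) (Fin b) R}
    {R₂ D₂ : Matrix (Fin b) (Fin c) R} {A : Matrix (Fin a) (Fin a) R}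
    {B A' : Matrix (Fin b) (Fin b) R} {B' : Matrix (Fin c) (Fin c) R}
    (hR₁ : R₁.IsRook) (hR₂ : R₂.IsRook) (hB : B.IsUnitriangular) (hA' : A'.IsUnitriangular)
    (h₁ : A * D₁ * B = R₁) (h₂ : A' * D₂ * B' = R₂) (hD : D₁ * D₂ = 0) : R₁ * R₂ = 0 := by
  ext i j
  rw [mul_apply, zero_apply]
  refine Finset.sum_eq_zero fun l _ => ?_
  rcases eq_or_ne (R₁ i l) 0 with hil | hil
  · rw [hil, zero_mul]
  rcases eq_or_ne (R₂ l j) 0 with hlj | hlj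
  · rw [hlj, mul_zero]
  obtain ⟨v, hvl, hv⟩ := hR₂.exists_mulVec_pivot hA' h₂ hlj
  rw [← hvl]
  exact hR₁.mul_apply_eq_zero_of_mulVec_eq_zero hB h₁ hil hv
    (by rw [mulVec_mulVec, hD, zero_mulVec])

end Matrix.IsRook

theorem rook_matrices_form_complex_general {F : Type*} [Field F]
    {n : ℕ} (m : ℕ → ℕ)
    (D R : ∀ k : ℕ, Matrix (Fin (m k)) (Fin (m (k + 1))) F)
    (hD : ∀ k, k + 1 < n → D k * D (k + 1) = 0)
    (hRrook : ∀ k, k < n → (R k).IsRook)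
    (hRorb : ∀ k, k < n →
      ∃ (A : Matrix (Fin (m k)) (Fin (m k)) F)
        (B : Matrix (Fin (m (k + 1))) (Fin (m (k + 1))) F),
        A.IsUnitriangular ∧ B.IsUnitriangular ∧ A * D k * B = R k) :
    ∀ k, k + 1 < n → R k * R (k + 1) = 0 := by
  intro k hk
  obtain ⟨_, _, -, hB, h₁⟩ := hRorb k (by omega)
  obtain ⟨_, _, hA', -, h₂⟩ := hRorb (k + 1) hk
  exact (hRrook k (by omega)).mul_eq_zero_of_mul_eq_zero (hRrook (k + 1) hk) hB hA' h₁ h₂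
    (hD k hk)

/-- The rook matrices of the differentials of a chain complex again form the
differentials of a chain complex: if `D k * D (k+1) = 0` then the corresponding
rook matrices satisfy `R k * R (k+1) = 0`. (Differentials are indexed here by
`k = 0, …, n-1`, `D k` of size `m k × m (k+1)`.) -/
theorem rook_matrices_form_complex {F : Type*} [Field F]
    {n : ℕ} (hn : 2 ≤ n) (m : ℕ → ℕ)
    (D R : ∀ k : ℕ, Matrix (Fin (m k)) (Fin (m (k + 1))) F)
    (hD : ∀ k, k + 1 < n → D k * D (k + 1) = 0)
    (hRrook : ∀ k, k < n → (R k).IsRook)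
    (hRorb : ∀ k, k < n →
      ∃ (A : Matrix (Fin (m k)) (Fin (m k)) F)
        (B : Matrix (Fin (m (k + 1))) (Fin (m (k + 1))) F),
        A.IsUnitriangular ∧ B.IsUnitriangular ∧ A * D k * B = R k) :
    ∀ k, k + 1 < n → R k * R (k + 1) = 0 :=
  rook_matrices_form_complex_general m D R hD hRrook hRorb
end
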